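/- Let N be a positive integer, h, g : ZMod N → ℂ filters with |ĥ(k)|² + |ĝ(k)|² = 1 for every k ∈ ZMod N, and J ≥ 1. For x : ZMod N → ℂ let W_j x (for 1 ≤ j ≤ J) be the function whose discrete Fourier transform is k ↦ ĥ(2^{j−1}·k) · ∏_{l=0}^{j−2} ĝ(2^l·k) · x̂(k), and let V_J x be the function whose discrete Fourier transform is k ↦ ∏_{l=0}^{J−1} ĝ(2^l·k) · x̂(k) (products over the empty range equal 1, and 2^l·k is multiplication in ZMod N). Then for all x, y : ZMod N → ℂ: ∑_t x(t) conj(y(t)) = ∑_{j=1}^{J} ∑_t (W_j x)(t) conj((W_j y)(t)) + ∑_t (V_J x)(t) conj((V_J y)(t)). That is, the level-J MODWT pyramid exactly preserves cross-products, so the realized covariance equals the sum over all wavelet scales plus the scaling level of the filtered cross-products. -/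

import Mathlib

/-!
By Plancherel on `ZMod N`, the cross-product `∑ₜ x t * conj (y t)` is `N⁻¹` times the
frequency-domain sum `∑ₖ x̂ k * conj (ŷ k)`, and every filter of the pyramid acts diagonally in
frequency. So it suffices to check the identity at a single frequency `k`, where it is an
energy split: step `n` of the pyramid divides the scaling branch `∏_{l<n} ĝ(2^l k)` into
`ĥ(2^n k)` and `ĝ(2^n k)` times it, and `|ĥ|² + |ĝ|² = 1` at every frequency, in particular
at `2^n k`.
-/

open Complex Finset

/-- The discrete Fourier transform `â(k) = ∑_t a(t) e^{−2πi k t / N}`. -/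
noncomputable def dft {N : ℕ} [NeZero N] (a : ZMod N → ℂ) (k : ZMod N) : ℂ :=
  ∑ t : ZMod N, a t * Complex.exp (-(2 * (Real.pi : ℂ) * k.val * t.val / N) * Complex.I)

open ComplexConjugate
open scoped ZMod

namespace ZMod

variable {N : ℕ} [NeZero N]

theorem sum_dft_mul_conj_dft (a b : ZMod N → ℂ) :
    ∑ k, 𝓕 a k * conj (𝓕 b k) = N * ∑ t, a t * conj (b t) := by
  have inversion : ∀ t, ∑ k, stdAddChar (k * t) * 𝓕 b k = N * b t := by
    intro t
    have := congrFun (dft.symm_apply_apply b) t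
    rw [invDFT_apply, inv_smul_eq_iff₀ (Nat.cast_ne_zero.mpr (NeZero.ne N))] at this
    simpa only [smul_eq_mul] using this
  calc ∑ k, 𝓕 a k * conj (𝓕 b k)
      = ∑ t, a t * conj (∑ k, stdAddChar (k * t) * 𝓕 b k) := by
        simp only [dft_apply a, smul_eq_mul, sum_mul, map_sum, map_mul, mul_sum,
          ← AddChar.map_neg_eq_conj]
        rw [sum_comm]
        refine sum_congr rfl fun t _ => sum_congr rfl fun k _ => ?_
        rw [mul_comm k t]
        ring
    _ = N * ∑ t, a t * conj (b t) := by
        simp only [inversion, map_mul, map_natCast, mul_sum]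
        exact sum_congr rfl fun t _ => by ring

end ZMod

theorem dft_eq_zmod_dft {N : ℕ} [NeZero N] (a : ZMod N → ℂ) : dft a = 𝓕 a := by
  ext k
  refine sum_congr rfl fun t _ => ?_
  have hcast : -(t * k) = ((-((t.val : ℤ) * k.val) : ℤ) : ZMod N) := by
    push_cast
    simp only [ZMod.natCast_val, ZMod.cast_id', id]
  rw [smul_eq_mul, mul_comm, hcast, ZMod.stdAddChar_coe]
  congr 2
  push_cast
  ring

theorem sum_dft_mul_conj_dft {N : ℕ} [NeZero N] (a b : ZMod N → ℂ) :
    ∑ k, dft a k * conj (dft b k) = N * ∑ t, a t * conj (b t) := by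
  simp only [dft_eq_zmod_dft, ZMod.sum_dft_mul_conj_dft]

theorem pyramid_gain_sum_mul_conj {K : Type*} [RCLike K] (H G : ℕ → K) (hHG : ∀ i, ‖H i‖ ^ 2 + ‖G i‖ ^ 2 = 1)
    (J : ℕ) (u v : K) :
    ∑ j ∈ Icc 1 J, H (j - 1) * (∏ l ∈ range (j - 1), G l) * u *
        conj (H (j - 1) * (∏ l ∈ range (j - 1), G l) * v)
      + (∏ l ∈ range J, G l) * u * conj ((∏ l ∈ range J, G l) * v) = u * conj v := by
  induction J with
  | zero => simp
  | succ n ih =>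
    have hsplit : H n * conj (H n) + G n * conj (G n) = 1 := by
      simp only [RCLike.mul_conj]
      exact_mod_cast hHG n
    rw [sum_Icc_succ_top (by omega), prod_range_succ, Nat.add_sub_cancel]
    simp only [map_mul, map_prod] at ih ⊢
    linear_combination ih + (∏ l ∈ range n, G l) * u * (∏ l ∈ range n, conj (G l)) * conj v *
      hsplit

theorem modwt_pyramid_preserves_cross_products (N : ℕ) [NeZero N] (h g : ZMod N → ℂ)
    (hgain : ∀ k : ZMod N, ‖dft h k‖ ^ 2 + ‖dft g k‖ ^ 2 = 1)
    (J : ℕ) (x y : ZMod N → ℂ)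
    (Wx Wy : ℕ → ZMod N → ℂ) (Vx Vy : ZMod N → ℂ)
    (hWx : ∀ j : ℕ, 1 ≤ j → j ≤ J → ∀ k : ZMod N,
      dft (Wx j) k = dft h ((2 : ZMod N) ^ (j - 1) * k) *
        (∏ l ∈ Finset.range (j - 1), dft g ((2 : ZMod N) ^ l * k)) * dft x k)
    (hWy : ∀ j : ℕ, 1 ≤ j → j ≤ J → ∀ k : ZMod N,
      dft (Wy j) k = dft h ((2 : ZMod N) ^ (j - 1) * k) *
        (∏ l ∈ Finset.range (j - 1), dft g ((2 : ZMod N) ^ l * k)) * dft y k)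
    (hVx : ∀ k : ZMod N,
      dft Vx k = (∏ l ∈ Finset.range J, dft g ((2 : ZMod N) ^ l * k)) * dft x k)
    (hVy : ∀ k : ZMod N,
      dft Vy k = (∏ l ∈ Finset.range J, dft g ((2 : ZMod N) ^ l * k)) * dft y k) :
    (∑ t : ZMod N, x t * (starRingEnd ℂ) (y t))
      = (∑ j ∈ Finset.Icc 1 J, ∑ t : ZMod N, Wx j t * (starRingEnd ℂ) (Wy j t))
        + ∑ t : ZMod N, Vx t * (starRingEnd ℂ) (Vy t) := by
  refine mul_left_cancel₀ (Nat.cast_ne_zero.mpr (NeZero.ne N) : (N : ℂ) ≠ 0) ?_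
  simp only [mul_add, ← sum_dft_mul_conj_dft]
  rw [mul_sum]
  simp only [← sum_dft_mul_conj_dft]
  rw [sum_comm, ← sum_add_distrib]
  refine sum_congr rfl fun k _ => ?_
  have hW : ∀ j ∈ Icc 1 J, dft (Wx j) k * conj (dft (Wy j) k) =
      dft h (2 ^ (j - 1) * k) * (∏ l ∈ range (j - 1), dft g (2 ^ l * k)) * dft x k *
        conj (dft h (2 ^ (j - 1) * k) * (∏ l ∈ range (j - 1), dft g (2 ^ l * k)) * dft y k) := by
    intro j hj
    obtain ⟨hj1, hjJ⟩ := mem_Icc.mp hj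
    rw [hWx j hj1 hjJ, hWy j hj1 hjJ]
  rw [sum_congr rfl hW, hVx, hVy]
  exact (pyramid_gain_sum_mul_conj (fun i => dft h (2 ^ i * k)) (fun i => dft g (2 ^ i * k))
    (fun i => hgain _) J (dft x k) (dft y k)).symm
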